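/- There exists a multi-stakeholder induced preference graph and sets ⟦ψ₁⟧, ⟦ψ₂⟧ of outcomes such that all four collaborative semantics of P(ψ₁, ψ₂, A) are pairwise distinct; in particular the inclusions W1A2 ⊆ W1A1, W1A2 ⊆ W2A2, W1A1 ⊆ W2A1, W2A2 ⊆ W2A1 can all be simultaneously strict. -/

import Mathlib

def prec {O α : Type*} (E : O → Set α → O → Prop) (A : Set α) (o o' : O) : Prop :=
  ∃ A', E o A' o' ∧ (A ∩ A').Nonempty

def precPlus {O α : Type*} (E : O → Set α → O → Prop) (A : Set α) : O → O → Prop :=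
  Relation.TransGen (prec E A)

def witW1 {O α : Type*} (E : O → Set α → O → Prop) (S₂ : Set O) (A : Set α) : Set O :=
  ⋃ a ∈ A, {o | ∃ o' ∈ S₂, precPlus E {a} o' o}

def witW2 {O α : Type*} (E : O → Set α → O → Prop) (S₂ : Set O) (A : Set α) : Set O :=
  {o | ∃ o' ∈ S₂, precPlus E A o' o}

def agrA1 {O α : Type*} (E : O → Set α → O → Prop) (S₂ : Set O) (A : Set α) : Set O :=
  ⋂ a ∈ A, {o | ∀ o' ∈ S₂, ¬ precPlus E {a} o o'}

def agrA2 {O α : Type*} (E : O → Set α → O → Prop) (S₂ : Set O) (A : Set α) : Set O :=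
  {o | ∀ o' ∈ S₂, ¬ precPlus E A o o'}

/-!
Agent-wise witnessing implies coalition-wise witnessing, and coalition-wise agreement implies
agent-wise agreement, so the four semantics always satisfy the four inclusions. Strictness
everywhere needs just two outcomes in `⟦ψ₁⟧`: one that no single agent leads back into `⟦ψ₂⟧`
although the coalition does (`3 → 4` for agent `0`, then `4 → 0` for agent `1`), and one that
the coalition reaches from `⟦ψ₂⟧` although no single agent does (`0 → 1` for agent `0`, then
`1 → 2` for agent `1`).
-/

open Relation Set

theorem Relation.TransGen.mem_of_forall_imp {α : Type*} {r : α → α → Prop} {S : Set α}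
    (hS : ∀ x y, r x y → x ∈ S → y ∈ S) {a b : α} (h : TransGen r a b) (ha : a ∈ S) :
    b ∈ S := by
  induction h with
  | single hab => exact hS _ _ hab ha
  | tail _ hbc ih => exact hS _ _ hbc ih

theorem Relation.not_transGen_of_forall_imp {α : Type*} {r : α → α → Prop} {S : Set α}
    (hS : ∀ x y, r x y → x ∈ S → y ∈ S) {a b : α} (ha : a ∈ S) (hb : b ∉ S) :
    ¬ TransGen r a b :=
  fun h => hb (h.mem_of_forall_imp hS ha)

section Semantics

variable {O α : Type*} (E : O → Set α → O → Prop) (S₂ : Set O)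

theorem prec_mono {A B : Set α} (hAB : A ⊆ B) : prec E A ≤ prec E B :=
  fun _ _ ⟨A', hE, hA⟩ => ⟨A', hE, hA.mono (inter_subset_inter_left A' hAB)⟩

theorem precPlus_mono {A B : Set α} (hAB : A ⊆ B) : precPlus E A ≤ precPlus E B :=
  TransGen.mono (prec_mono E hAB)

theorem witW1_subset_witW2 (A : Set α) : witW1 E S₂ A ⊆ witW2 E S₂ A := by
  intro o ho
  simp only [witW1, mem_iUnion₂] at ho
  obtain ⟨a, ha, o', ho', hreach⟩ := ho
  exact ⟨o', ho', precPlus_mono E (singleton_subset_iff.mpr ha) _ _ hreach⟩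

theorem agrA2_subset_agrA1 (A : Set α) : agrA2 E S₂ A ⊆ agrA1 E S₂ A := by
  intro o ho
  simp only [agrA1, mem_iInter₂]
  intro a ha o' ho' hreach
  exact ho o' ho' (precPlus_mono E (singleton_subset_iff.mpr ha) _ _ hreach)

end Semantics

theorem inter_ssubset_pairwise_of_witnesses {β : Type*} {S W₁ W₂ A₁ A₂ : Set β}
    (hW : W₁ ⊆ W₂) (hA : A₂ ⊆ A₁) {x y : β}
    (hx : x ∈ S ∩ W₁ ∩ A₁) (hxA : x ∉ A₂) (hy : y ∈ S ∩ W₂ ∩ A₂) (hyW : y ∉ W₁) :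
    (S ∩ W₁ ∩ A₂ ⊂ S ∩ W₁ ∩ A₁) ∧ (S ∩ W₁ ∩ A₂ ⊂ S ∩ W₂ ∩ A₂) ∧
      (S ∩ W₁ ∩ A₁ ⊂ S ∩ W₂ ∩ A₁) ∧ (S ∩ W₂ ∩ A₂ ⊂ S ∩ W₂ ∩ A₁) ∧
      (S ∩ W₁ ∩ A₁ ≠ S ∩ W₂ ∩ A₂) := by
  have hW' {A : Set β} : S ∩ W₁ ∩ A ⊆ S ∩ W₂ ∩ A := inter_subset_inter_left _ (by gcongr)
  have hA' {W : Set β} : S ∩ W ∩ A₂ ⊆ S ∩ W ∩ A₁ := inter_subset_inter_right _ hA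
  refine ⟨(ssubset_iff_of_subset hA').2 ⟨x, hx, fun h => hxA h.2⟩,
    (ssubset_iff_of_subset hW').2 ⟨y, hy, fun h => hyW h.1.2⟩,
    (ssubset_iff_of_subset hW').2 ⟨y, ⟨hy.1, hA hy.2⟩, fun h => hyW h.1.2⟩,
    (ssubset_iff_of_subset hA').2 ⟨x, ⟨⟨hx.1.1, hW hx.1.2⟩, hx.2⟩, fun h => hxA h.2⟩, ?_⟩
  intro h
  exact hxA (h ▸ hx).2

/-- The edge `o → o'` carries the set of agents `a` with `R a o o'`. -/
def inducedGraph {O α : Type*} (R : α → O → O → Prop) : O → Set α → O → Prop :=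
  fun o A' o' => A' = {a | R a o o'} ∧ A'.Nonempty

section InducedGraph

variable {O α : Type*} (R : α → O → O → Prop)

theorem prec_inducedGraph (A : Set α) :
    prec (inducedGraph R) A = fun o o' => ∃ a ∈ A, R a o o' := by
  ext o o'
  constructor
  · rintro ⟨_, ⟨rfl, -⟩, a, ha, hR⟩
    exact ⟨a, ha, hR⟩
  · rintro ⟨a, ha, hR⟩
    exact ⟨_, ⟨rfl, a, hR⟩, a, ha, hR⟩

theorem precPlus_inducedGraph_singleton (a : α) :
    precPlus (inducedGraph R) {a} = TransGen (R a) := by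
  simp [precPlus, prec_inducedGraph]

theorem precPlus_inducedGraph_univ :
    precPlus (inducedGraph R) univ = TransGen fun o o' => ∃ a, R a o o' := by
  simp [precPlus, prec_inducedGraph]

end InducedGraph

/-- Edges as triples `(agent, o, o')`. -/
def exampleEdges (a : Fin 2) (o o' : Fin 8) : Prop :=
  (a, o, o') ∈ ({(0, 0, 1), (0, 0, 3), (0, 3, 4), (1, 1, 2), (1, 4, 0)} : Finset _)

instance (a : Fin 2) : DecidableRel (exampleEdges a) :=
  fun _ _ => by unfold exampleEdges; infer_instance

abbrev exampleGraph : Fin 8 → Set (Fin 2) → Fin 8 → Prop := inducedGraph exampleEdges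

theorem three_mem_witW1 : 3 ∈ witW1 exampleGraph {0} univ := by
  simp only [witW1, mem_iUnion₂, mem_ofPred_eq, exists_eq_left, mem_singleton_iff,
    precPlus_inducedGraph_singleton]
  exact ⟨0, mem_univ _, .single (by decide)⟩

theorem three_mem_agrA1 : 3 ∈ agrA1 exampleGraph {0} univ := by
  simp only [agrA1, mem_iInter₂, mem_ofPred_eq, mem_singleton_iff, forall_eq,
    precPlus_inducedGraph_singleton]
  intro a _
  fin_cases a
  · exact not_transGen_of_forall_imp (S := ({3, 4} : Finset (Fin 8)))
      (by decide) (by decide) (by decide)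
  · exact not_transGen_of_forall_imp (S := ({3} : Finset (Fin 8)))
      (by decide) (by decide) (by decide)

theorem three_notMem_agrA2 : 3 ∉ agrA2 exampleGraph {0} univ := by
  simp only [agrA2, mem_ofPred_eq, mem_singleton_iff, forall_eq, precPlus_inducedGraph_univ,
    not_not]
  exact .head (b := 4) ⟨0, by decide⟩ (.single ⟨1, by decide⟩)

theorem two_mem_witW2 : 2 ∈ witW2 exampleGraph {0} univ := by
  simp only [witW2, mem_ofPred_eq, mem_singleton_iff, exists_eq_left, precPlus_inducedGraph_univ]
  exact .head (b := 1) ⟨0, by decide⟩ (.single ⟨1, by decide⟩)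

theorem two_mem_agrA2 : 2 ∈ agrA2 exampleGraph {0} univ := by
  simp only [agrA2, mem_ofPred_eq, mem_singleton_iff, forall_eq, precPlus_inducedGraph_univ]
  exact not_transGen_of_forall_imp (S := ({2} : Finset (Fin 8)))
    (by decide) (by decide) (by decide)

theorem two_notMem_witW1 : 2 ∉ witW1 exampleGraph {0} univ := by
  simp only [witW1, mem_iUnion₂, mem_ofPred_eq, exists_eq_left, mem_singleton_iff,
    precPlus_inducedGraph_singleton, not_exists]
  intro a _
  fin_cases a
  · exact not_transGen_of_forall_imp (S := ({0, 1, 3, 4} : Finset (Fin 8)))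
      (by decide) (by decide) (by decide)
  · exact not_transGen_of_forall_imp (S := ({0} : Finset (Fin 8)))
      (by decide) (by decide) (by decide)

/-- There is a multi-stakeholder induced preference graph on which the four
collaborative semantics of `P(ψ₁, ψ₂, A)` are pairwise distinct; in particular all
four inclusions are simultaneously strict. -/
theorem four_semantics_pairwise_distinct :
    ∃ (E : Fin 8 → Set (Fin 2) → Fin 8 → Prop) (S₁ S₂ : Set (Fin 8)) (A : Set (Fin 2)),
      (S₁ ∩ witW1 E S₂ A ∩ agrA2 E S₂ A ⊂ S₁ ∩ witW1 E S₂ A ∩ agrA1 E S₂ A) ∧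
      (S₁ ∩ witW1 E S₂ A ∩ agrA2 E S₂ A ⊂ S₁ ∩ witW2 E S₂ A ∩ agrA2 E S₂ A) ∧
      (S₁ ∩ witW1 E S₂ A ∩ agrA1 E S₂ A ⊂ S₁ ∩ witW2 E S₂ A ∩ agrA1 E S₂ A) ∧
      (S₁ ∩ witW2 E S₂ A ∩ agrA2 E S₂ A ⊂ S₁ ∩ witW2 E S₂ A ∩ agrA1 E S₂ A) ∧
      (S₁ ∩ witW1 E S₂ A ∩ agrA1 E S₂ A ≠ S₁ ∩ witW2 E S₂ A ∩ agrA2 E S₂ A) :=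
  ⟨exampleGraph, univ, {0}, univ,
    inter_ssubset_pairwise_of_witnesses (witW1_subset_witW2 _ _ _) (agrA2_subset_agrA1 _ _ _)
      ⟨⟨mem_univ 3, three_mem_witW1⟩, three_mem_agrA1⟩ three_notMem_agrA2
      ⟨⟨mem_univ 2, two_mem_witW2⟩, two_mem_agrA2⟩ two_notMem_witW1⟩
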